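/- Let φ : G → Homeo(X) be an expansive continuous action with expansive constant c > 0 of a finitely generated group G, with finite symmetric generating set S, on a compact metric space (X,d). Let l be a positive integer such that for any x, y ∈ X with d(x,y) ≥ c/2 one has max_{g∈G, |g|≤l} d(gx, gy) ≥ c, and let α > 1 be a real number with α^l < 2. Define n(x,y) = min{n ∈ ℕ : ∃ g ∈ G, |g| ≤ n, d(gx, gy) ≥ c} for x ≠ y, n(x,y) = ∞ otherwise, and ρ(x,y) = α^{-n(x,y)} (with α^{-∞} = 0). Then ρ is compatible with the topology of X: the balls B_ρ(x,r) = {y ∈ X : ρ(x,y) < r}, for x ∈ X and r > 0, form an open base of the topology of X. -/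

import Mathlib

open Pointwise Filter Metric Set Topology TopologicalSpace

/-- The group of self-homeomorphisms of `X`, with `(f * g) x = f (g x)`. -/
instance homeoGroup {X : Type*} [TopologicalSpace X] : Group (X ≃ₜ X) where
  mul f g := g.trans f
  one := Homeomorph.refl X
  inv := Homeomorph.symm
  mul_assoc _ _ _ := rfl
  one_mul _ := Homeomorph.ext fun _ => rfl
  mul_one _ := Homeomorph.ext fun _ => rfl
  inv_mul_cancel f := Homeomorph.ext f.symm_apply_apply

/-- The word length of `g` with respect to the (symmetric) generating set `S`:
the least `n` such that `g` is a product of `n` elements of `S`. -/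
noncomputable def wordLength {G : Type*} [Group G] (S : Set G) (g : G) : ℕ :=
  sInf {n : ℕ | g ∈ S ^ n}

/-- The growth function `β(G,S;k) = #{g ∈ G : |g| ≤ k}`. -/
noncomputable def growthFn {G : Type*} [Group G] (S : Set G) (k : ℕ) : ℕ :=
  Set.ncard {g : G | wordLength S g ≤ k}

/-- `G` has subexponential growth w.r.t. `S`: `lim_k β(G,S;k)^{1/k} ≤ 1`. -/
def SubexpGrowth {G : Type*} [Group G] (S : Set G) : Prop :=
  Filter.limsup (fun k : ℕ => (growthFn S k : ℝ) ^ (1 / (k : ℝ))) Filter.atTop ≤ 1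

/-- A continuum (here: a compact connected metric space, via instances) is Suslinian if
every family of pairwise disjoint nondegenerate subcontinua is countable. -/
def Suslinian (X : Type*) [MetricSpace X] : Prop :=
  ∀ 𝒜 : Set (Set X), (∀ A ∈ 𝒜, IsCompact A ∧ IsConnected A ∧ A.Nontrivial) →
    𝒜.Pairwise Disjoint → 𝒜.Countable

/-- `n(x,y)`: the least `n` such that `d(gx,gy) ≥ c` for some `g` with `|g| ≤ n`
(`∞` if there is no such `n`, in particular when `x = y`). -/
noncomputable def nIdx {G X : Type*} [Group G] [MetricSpace X] (S : Set G)
    (φ : G →* (X ≃ₜ X)) (c : ℝ) (x y : X) : ℕ∞ :=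
  sInf ((↑) '' {n : ℕ | ∃ g : G, wordLength S g ≤ n ∧ c ≤ dist (φ g x) (φ g y)})

/-- `ρ(x,y) = α^{-n(x,y)}`, with `α^{-∞} = 0`. -/
noncomputable def rho {G X : Type*} [Group G] [MetricSpace X] (S : Set G)
    (φ : G →* (X ≃ₜ X)) (c α : ℝ) (x y : X) : ℝ :=
  if nIdx S φ c x y = ⊤ then 0 else α ^ (-((nIdx S φ c x y).toNat : ℤ))

/-!
Since `ρ(x,y) = α^{-n(x,y)}` decreases in `n(x,y)`, a `ρ`-ball around `x` is either all of `X`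
or a set `{y | n < n(x,y)}`, i.e. the set of `y` with `d(gx,gy) < c` for all `|g| ≤ n`; word
balls are finite, so this set is open. Conversely, the compact set `{(u,v) | d(u,v) ≥ ε}` is
covered by the open sets `{(u,v) | d(gu,gv) > c}`, so finitely many `g`, all of length at most
some `N`, suffice: then `ρ(x,y) < α^{-N}` forces `d(x,y) < ε`.
-/

theorem Set.Finite.pow {M : Type*} [Monoid M] {s : Set M} (hs : s.Finite) (n : ℕ) :
    (s ^ n).Finite := by
  induction n with
  | zero => simp
  | succ n ih => rw [pow_succ]; exact ih.mul hs

section WordLength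

variable {G : Type*} [Group G] {S : Set G}

theorem exists_mem_pow_of_closure_eq_top (hSsym : S⁻¹ = S) (hSgen : Subgroup.closure S = ⊤)
    (g : G) : ∃ n : ℕ, g ∈ S ^ n := by
  have hg : g ∈ Subgroup.closure S := hSgen ▸ Subgroup.mem_top g
  induction hg using Subgroup.closure_induction with
  | mem x hx => exact ⟨1, by simpa using hx⟩
  | one => exact ⟨0, by simp⟩
  | mul x y _ _ ihx ihy =>
    obtain ⟨m, hm⟩ := ihx
    obtain ⟨n, hn⟩ := ihy
    exact ⟨m + n, pow_add S m n ▸ Set.mul_mem_mul hm hn⟩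
  | inv x _ ih =>
    obtain ⟨n, hn⟩ := ih
    refine ⟨n, ?_⟩
    rw [← hSsym, inv_pow]
    exact Set.inv_mem_inv.2 hn

theorem mem_pow_wordLength (hSsym : S⁻¹ = S) (hSgen : Subgroup.closure S = ⊤) (g : G) :
    g ∈ S ^ wordLength S g :=
  Nat.sInf_mem (exists_mem_pow_of_closure_eq_top hSsym hSgen g)

theorem finite_setOf_wordLength_le (hSfin : S.Finite) (hSsym : S⁻¹ = S)
    (hSgen : Subgroup.closure S = ⊤) (n : ℕ) : {g : G | wordLength S g ≤ n}.Finite :=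
  ((Set.finite_Iic n).biUnion fun m _ => hSfin.pow m).subset fun g hg =>
    Set.mem_biUnion hg (mem_pow_wordLength hSsym hSgen g)

end WordLength

theorem exists_forall_dist_lt_of_expansive {ι X : Type*} [MetricSpace X] [CompactSpace X]
    {f : ι → X → X} (hf : ∀ i, Continuous (f i)) (w : ι → ℕ) {c : ℝ}
    (hexp : ∀ x y, x ≠ y → ∃ i, c < dist (f i x) (f i y)) {ε : ℝ} (hε : 0 < ε) :
    ∃ N : ℕ, ∀ x y, (∀ i, w i ≤ N → dist (f i x) (f i y) < c) → dist x y < ε := by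
  have hK : IsCompact {p : X × X | ε ≤ dist p.1 p.2} :=
    (isClosed_le continuous_const continuous_dist).isCompact
  obtain ⟨t, ht⟩ := hK.elim_finite_subcover (fun i => {p : X × X | c < dist (f i p.1) (f i p.2)})
    (fun i => isOpen_lt continuous_const
      (((hf i).comp continuous_fst).dist ((hf i).comp continuous_snd)))
    (fun p hp => Set.mem_iUnion.2 (hexp p.1 p.2 (dist_pos.1 (hε.trans_le hp))))
  refine ⟨t.sup w, fun x y hxy => not_le.1 fun hle => ?_⟩
  obtain ⟨i, hi, hci⟩ := Set.mem_iUnion₂.1 (ht (show (x, y) ∈ _ from hle))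
  exact (hci.trans (hxy i (Finset.le_sup hi))).false

noncomputable def negPow (α : ℝ) (e : ℕ∞) : ℝ :=
  if e = ⊤ then 0 else α ^ (-(e.toNat : ℤ))

section NegPow

variable {α : ℝ}

@[simp]
theorem negPow_top : negPow α ⊤ = 0 := if_pos rfl

@[simp]
theorem negPow_coe (n : ℕ) : negPow α n = α ^ (-(n : ℤ)) := by
  simp [negPow]

@[simp]
theorem negPow_zero : negPow α 0 = 1 := by
  simpa using negPow_coe (α := α) 0

theorem negPow_antitone (hα : 1 ≤ α) : Antitone (negPow α) := by
  intro a b hab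
  induction b using ENat.recTopCoe with
  | top => cases a using ENat.recTopCoe <;> simp [pow_nonneg (zero_le_one.trans hα)]
  | coe n =>
    lift a to ℕ using ne_top_of_le_ne_top (ENat.natCast_ne_top n) hab
    simp only [negPow_coe]
    exact zpow_le_zpow_right₀ hα (by simpa using hab)

theorem negPow_le_one (hα : 1 ≤ α) (e : ℕ∞) : negPow α e ≤ 1 := by
  simpa using negPow_antitone hα (zero_le : 0 ≤ e)

theorem exists_coe_lt_of_negPow_lt (hα : 1 < α) {e : ℕ∞} {r : ℝ} (h : negPow α e < r)
    (hr : r ≤ 1) : ∃ n : ℕ, (n : ℕ∞) < e ∧ negPow α (n + 1) < r := by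
  induction e using ENat.recTopCoe with
  | top =>
    obtain ⟨n, hn⟩ := exists_pow_lt_of_lt_one (negPow_top ▸ h) (inv_lt_one_of_one_lt₀ hα)
    refine ⟨n, ENat.natCast_lt_top n, (negPow_antitone hα.le le_self_add).trans_lt ?_⟩
    simpa [zpow_neg] using hn
  | coe m =>
    obtain _ | n := m
    · rw [Nat.cast_zero, negPow_zero] at h
      exact absurd (h.trans_le hr) (lt_irrefl 1)
    · exact ⟨n, by exact_mod_cast n.lt_succ_self, by simpa using h⟩

end NegPow

section Rho

variable {G X : Type*} [Group G] [MetricSpace X] {S : Set G} {φ : G →* (X ≃ₜ X)} {c α : ℝ}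

theorem rho_eq_negPow_nIdx (x y : X) : rho S φ c α x y = negPow α (nIdx S φ c x y) := rfl

theorem coe_lt_nIdx_iff {x y : X} {n : ℕ} :
    (n : ℕ∞) < nIdx S φ c x y ↔ ∀ g, wordLength S g ≤ n → dist (φ g x) (φ g y) < c := by
  rw [← ENat.add_one_le_iff (ENat.natCast_ne_top n), nIdx, le_sInf_iff, Set.forall_mem_image]
  simp only [Set.mem_ofPred_eq, forall_exists_index, and_imp]
  constructor
  · intro h g hg
    by_contra! hd
    exact absurd (h g hg hd) (by norm_cast; omega)
  · intro h m g hgm hd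
    by_contra! hmn
    exact (h g (hgm.trans (by norm_cast at hmn; omega))).not_ge hd

theorem isOpen_setOf_coe_lt_nIdx (hSfin : S.Finite) (hSsym : S⁻¹ = S)
    (hSgen : Subgroup.closure S = ⊤) (x : X) (n : ℕ) :
    IsOpen {y | (n : ℕ∞) < nIdx S φ c x y} := by
  have hball : {y | (n : ℕ∞) < nIdx S φ c x y} =
      ⋂ g ∈ {g : G | wordLength S g ≤ n}, {y | dist (φ g x) (φ g y) < c} := by
    ext y
    simp [coe_lt_nIdx_iff]
  rw [hball]
  exact (finite_setOf_wordLength_le hSfin hSsym hSgen n).isOpen_biInter fun g _ =>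
    isOpen_lt (continuous_const.dist (φ g).continuous) continuous_const

theorem isOpen_setOf_rho_lt (hSfin : S.Finite) (hSsym : S⁻¹ = S)
    (hSgen : Subgroup.closure S = ⊤) (hα : 1 < α) (x : X) (r : ℝ) :
    IsOpen {y | rho S φ c α x y < r} := by
  rcases lt_or_ge 1 r with hr | hr
  · convert isOpen_univ
    exact Set.eq_univ_of_forall fun y => (negPow_le_one hα.le _).trans_lt hr
  rw [isOpen_iff_mem_nhds]
  intro y hy
  obtain ⟨n, hn, hnr⟩ := exists_coe_lt_of_negPow_lt hα hy hr
  filter_upwards [(isOpen_setOf_coe_lt_nIdx hSfin hSsym hSgen x n).mem_nhds hn] with z hz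
  exact (negPow_antitone hα.le (Order.add_one_le_of_lt hz)).trans_lt hnr

theorem exists_setOf_rho_lt_subset_ball [CompactSpace X]
    (hexp : ∀ x y : X, x ≠ y → ∃ g, c < dist (φ g x) (φ g y)) (hα : 1 < α) (x : X) {ε : ℝ}
    (hε : 0 < ε) : ∃ r > 0, {y | rho S φ c α x y < r} ⊆ Metric.ball x ε := by
  obtain ⟨N, hN⟩ :=
    exists_forall_dist_lt_of_expansive (fun g => (φ g).continuous) (wordLength S) hexp hε
  refine ⟨α ^ (-(N : ℤ)), zpow_pos (zero_lt_one.trans hα) _, fun y hy => ?_⟩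
  have hNy : (N : ℕ∞) < nIdx S φ c x y :=
    (negPow_antitone hα.le).reflect_lt (by simpa [rho_eq_negPow_nIdx] using hy)
  rw [Metric.mem_ball, dist_comm]
  exact hN x y (coe_lt_nIdx_iff.1 hNy)

end Rho

theorem rho_compatible_general
    {G : Type*} [Group G] (S : Set G) (hSfin : S.Finite) (hSsym : S⁻¹ = S)
    (hSgen : Subgroup.closure S = ⊤)
    {X : Type*} [MetricSpace X] [CompactSpace X] (φ : G →* (X ≃ₜ X))
    (c : ℝ)
    (hexp : ∀ x y : X, x ≠ y → c < ⨆ g : G, dist (φ g x) (φ g y))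
    (α : ℝ) (hα : 1 < α) :
    (∀ (x : X) (r : ℝ), 0 < r → IsOpen {y | rho S φ c α x y < r}) ∧
    (∀ s : Set X, IsOpen s → ∀ x ∈ s, ∃ r > (0 : ℝ), {y | rho S φ c α x y < r} ⊆ s) := by
  have hexp' : ∀ x y : X, x ≠ y → ∃ g, c < dist (φ g x) (φ g y) :=
    fun x y hxy => exists_lt_of_lt_ciSup (hexp x y hxy)
  refine ⟨fun x r _ => isOpen_setOf_rho_lt hSfin hSsym hSgen hα x r, fun s hs x hx => ?_⟩
  obtain ⟨ε, hε, hεs⟩ := Metric.isOpen_iff.1 hs x hx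
  obtain ⟨r, hr, hrε⟩ := exists_setOf_rho_lt_subset_ball hexp' hα x hε
  exact ⟨r, hr, hrε.trans hεs⟩

/-- `ρ` is compatible with the topology of `X`: the `ρ`-balls are open and they form
a base of the topology. -/
theorem rho_compatible
    {G : Type*} [Group G] (S : Set G) (hSfin : S.Finite) (hSsym : S⁻¹ = S)
    (hSgen : Subgroup.closure S = ⊤)
    {X : Type*} [MetricSpace X] [CompactSpace X] (φ : G →* (X ≃ₜ X))
    (c : ℝ) (hc : 0 < c)
    (hexp : ∀ x y : X, x ≠ y → c < ⨆ g : G, dist (φ g x) (φ g y))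
    (l : ℕ) (hl : 0 < l)
    (hlsep : ∀ x y : X, c / 2 ≤ dist x y →
      ∃ g : G, wordLength S g ≤ l ∧ c ≤ dist (φ g x) (φ g y))
    (α : ℝ) (hα : 1 < α) (hαl : α ^ l < 2) :
    (∀ (x : X) (r : ℝ), 0 < r → IsOpen {y | rho S φ c α x y < r}) ∧
    (∀ s : Set X, IsOpen s → ∀ x ∈ s, ∃ r > (0 : ℝ), {y | rho S φ c α x y < r} ⊆ s) :=
  rho_compatible_general S hSfin hSsym hSgen φ c hexp α hα
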